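/- arXiv:1612.02795 — 3 statements merged into one kernel-verified Lean document; each statement's English description precedes it below -/
import Mathlib

section
/- Let v_min, v_max be reals with 0 < v_min ≤ v_max, and let α < β and α' with β ≤ α'. Suppose times t, p, t' satisfy (β - α)/v_max ≤ p - t ≤ (β - α)/v_min and t + (α' - β)/v_max ≤ t' ≤ t + (α' - β)/v_min + (p - t). Then there exists a measurable speed signal v : [0, ∞) → [v_min, v_max] such that the trajectory x(s) = α + ∫ₜˢ v (for s ≥ t) satisfies x(p) = β; moreover any such trajectory passing through β at time p reaches α' no earlier than p + (α' - β)/v_max. -/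
/-!
A constant speed `(β - α) / (p - t)` covers `[α, β]` in exactly `p - t`, and the window on `p - t`
is precisely the condition that this speed lies in `[vmin, vmax]`. Conversely, since the speed is
positive the position is strictly increasing, so `α'` is reached after `p`, and covering the
remaining distance `α' - β` at speed at most `vmax` takes at least `(α' - β) / vmax`.
-/

open MeasureTheory intervalIntegral Set

lemma div_mem_Icc_of_div_le_of_le_div {d T vmin vmax : ℝ} (hmin : 0 < vmin) (hmax : 0 < vmax)
    (hT : 0 < T) (h₁ : d / vmax ≤ T) (h₂ : T ≤ d / vmin) : d / T ∈ Icc vmin vmax :=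
  ⟨(le_div_iff₀ hT).2 ((le_div_iff₀' hmin).1 h₂), (div_le_iff₀ hT).2 ((div_le_iff₀' hmax).1 h₁)⟩

section BoundedSpeed

variable {v : ℝ → ℝ} {a b : ℝ}

lemma intervalIntegrable_of_forall_mem_Icc {vmin vmax : ℝ} (hm : Measurable v)
    (hv : ∀ s, v s ∈ Icc vmin vmax) (a b : ℝ) : IntervalIntegrable v volume a b :=
  (intervalIntegrable_const (c := max |vmin| |vmax|)).mono_fun hm.aestronglyMeasurable <|
    Filter.Eventually.of_forall fun s => by
      simpa only [Real.norm_eq_abs] using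
        (abs_le_max_abs_abs (hv s).1 (hv s).2).trans (le_abs_self _)

lemma le_of_integral_nonneg_of_pos (hi : IntervalIntegrable v volume a b) (hv : ∀ s, 0 < v s)
    (h : 0 ≤ ∫ s in a..b, v s) : a ≤ b := by
  by_contra! hba
  have := intervalIntegral_pos_of_pos_on hi.symm (fun s _ => hv s) hba
  rw [integral_symm] at h
  linarith

lemma integral_le_mul_sub_of_le {C : ℝ} (hi : IntervalIntegrable v volume a b) (hab : a ≤ b)
    (hv : ∀ s, v s ≤ C) : ∫ s in a..b, v s ≤ C * (b - a) := by
  calc ∫ s in a..b, v s ≤ ∫ _ in a..b, C :=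
        integral_mono_on hab hi intervalIntegrable_const fun s _ => hv s
    _ = C * (b - a) := by rw [intervalIntegral.integral_const, smul_eq_mul, mul_comm]

end BoundedSpeed

theorem stmt_7_general (vmin vmax α β α' t p : ℝ)
    (h0 : 0 < vmin) (hv : vmin ≤ vmax) (hαβ : α < β) (hβα' : β ≤ α')
    (hp1 : (β - α) / vmax ≤ p - t) (hp2 : p - t ≤ (β - α) / vmin) :
    (∃ v : ℝ → ℝ, Measurable v ∧ (∀ s, v s ∈ Set.Icc vmin vmax) ∧
        α + ∫ s in t..p, v s = β) ∧
    (∀ v : ℝ → ℝ, Measurable v → (∀ s, v s ∈ Set.Icc vmin vmax) →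
        (α + ∫ s in t..p, v s = β) →
        ∀ s : ℝ, (α + ∫ σ in t..s, v σ = α') → p + (α' - β) / vmax ≤ s) := by
  have hvmax : 0 < vmax := h0.trans_le hv
  have htp : 0 < p - t := (div_pos (sub_pos.2 hαβ) hvmax).trans_le hp1
  refine ⟨⟨fun _ => (β - α) / (p - t), measurable_const,
    fun _ => div_mem_Icc_of_div_le_of_le_div h0 hvmax htp hp1 hp2, ?_⟩, ?_⟩
  · rw [intervalIntegral.integral_const, smul_eq_mul, mul_div_cancel₀ _ htp.ne']
    ring
  intro v hm hv hβ s hα'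
  have hi := intervalIntegrable_of_forall_mem_Icc hm hv
  have hps : ∫ σ in p..s, v σ = α' - β := by
    rw [← integral_interval_sub_left (hi t s) (hi t p)]
    linarith
  have hp_le_s : p ≤ s :=
    le_of_integral_nonneg_of_pos (hi p s) (fun σ => h0.trans_le (hv σ).1) (by linarith)
  have hdist := integral_le_mul_sub_of_le (hi p s) hp_le_s fun σ => (hv σ).2
  rw [← le_sub_iff_add_le', div_le_iff₀' hvmax]
  linarith

/-- Realizability of a process-time window for first-order dynamics, and the
release-time lower bound for the next conflict area downstream. -/
theorem stmt_7 (vmin vmax α β α' t p t' : ℝ)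
    (h0 : 0 < vmin) (hv : vmin ≤ vmax) (hαβ : α < β) (hβα' : β ≤ α')
    (hp1 : (β - α) / vmax ≤ p - t) (hp2 : p - t ≤ (β - α) / vmin)
    (ht1 : t + (α' - β) / vmax ≤ t') (ht2 : t' ≤ t + (α' - β) / vmin + (p - t)) :
    (∃ v : ℝ → ℝ, Measurable v ∧ (∀ s, v s ∈ Set.Icc vmin vmax) ∧
        α + ∫ s in t..p, v s = β) ∧
    (∀ v : ℝ → ℝ, Measurable v → (∀ s, v s ∈ Set.Icc vmin vmax) →
        (α + ∫ s in t..p, v s = β) →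
        ∀ s : ℝ, (α + ∫ σ in t..s, v σ = α') → p + (α' - β) / vmax ≤ s) :=
  stmt_7_general vmin vmax α β α' t p h0 hv hαβ hβα' hp1 hp2
end

section
/- For the double integrator ẍ = u with speed constrained to [v_min, v_max], v_min > 0, starting at position α with speed v₀ ≥ v_min, the minimum time t* to reach β > α from initial speed v_min satisfies t* ≥ the minimum time to reach β from any initial speed v₀ ≥ v_min; i.e., the minimum crossing time is antitone in the initial speed. -/
/-!
Admissible trajectories form a convex set, and cruising at `vmax` is admissible. Blending a
trajectory that starts at speed `w` with the cruise at `vmax`, with the weights that turn `w`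
into `w'`, gives a trajectory from `w'` that is never behind the original one: it has reached
`β` by the time the original does.
-/

/-- An admissible double-integrator trajectory with bounded input and speed. -/
def AdmissibleDI (umin umax vmin vmax x0 v0 : ℝ) (x v u : ℝ → ℝ) : Prop :=
  x 0 = x0 ∧ v 0 = v0 ∧
    ∀ t : ℝ, 0 ≤ t → HasDerivAt x (v t) t ∧ HasDerivAt v (u t) t ∧
      u t ∈ Set.Icc umin umax ∧ v t ∈ Set.Icc vmin vmax

/-- The minimum time for the double integrator to reach β starting from position α
with initial speed w. -/
noncomputable def minCrossTime (umin umax vmin vmax α β w : ℝ) : ℝ :=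
  sInf {t : ℝ | 0 ≤ t ∧ ∃ x v u : ℝ → ℝ,
    AdmissibleDI umin umax vmin vmax α w x v u ∧ x t = β}

open Set

namespace AdmissibleDI

variable {umin umax vmin vmax x0 v0 : ℝ} {x v u : ℝ → ℝ}

theorem combo {x0' v0' : ℝ} {x' v' u' : ℝ → ℝ}
    (h : AdmissibleDI umin umax vmin vmax x0 v0 x v u)
    (h' : AdmissibleDI umin umax vmin vmax x0' v0' x' v' u')
    {a b : ℝ} (ha : 0 ≤ a) (hb : 0 ≤ b) (hab : a + b = 1) :
    AdmissibleDI umin umax vmin vmax (a * x0 + b * x0') (a * v0 + b * v0')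
      (fun t => a * x t + b * x' t) (fun t => a * v t + b * v' t)
      (fun t => a * u t + b * u' t) := by
  obtain ⟨hx0, hv0, hh⟩ := h
  obtain ⟨hx0', hv0', hh'⟩ := h'
  refine ⟨by simp only [hx0, hx0'], by simp only [hv0, hv0'], fun t ht => ?_⟩
  obtain ⟨hx, hv, hu, hvt⟩ := hh t ht
  obtain ⟨hx', hv', hu', hvt'⟩ := hh' t ht
  exact ⟨(hx.const_mul a).add (hx'.const_mul b), (hv.const_mul a).add (hv'.const_mul b),
    convex_Icc umin umax hu hu' ha hb hab, convex_Icc vmin vmax hvt hvt' ha hb hab⟩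

theorem cruise (hu : (0 : ℝ) ∈ Icc umin umax) (hv : v0 ∈ Icc vmin vmax) :
    AdmissibleDI umin umax vmin vmax x0 v0 (fun t => x0 + v0 * t) (fun _ => v0) (fun _ => 0) :=
  ⟨by simp, rfl, fun t _ =>
    ⟨by simpa using ((hasDerivAt_id t).const_mul v0).const_add x0, hasDerivAt_const t v0, hu, hv⟩⟩

theorem initialSpeed_mem (h : AdmissibleDI umin umax vmin vmax x0 v0 x v u) :
    v0 ∈ Icc vmin vmax :=
  h.2.1 ▸ (h.2.2 0 le_rfl).2.2.2

theorem continuousOn (h : AdmissibleDI umin umax vmin vmax x0 v0 x v u) :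
    ContinuousOn x (Ici 0) :=
  fun t ht => (h.2.2 t ht).1.continuousAt.continuousWithinAt

theorem sub_le_mul (h : AdmissibleDI umin umax vmin vmax x0 v0 x v u) {t : ℝ} (ht : 0 ≤ t) :
    x t - x0 ≤ vmax * t := by
  have hderiv : ∀ s ∈ interior (Ici (0 : ℝ)), HasDerivAt x (v s) s :=
    fun s hs => (h.2.2 s (interior_subset hs)).1
  have hbound := (convex_Ici (0 : ℝ)).image_sub_le_mul_sub_of_deriv_le h.continuousOn
    (fun s hs => (hderiv s hs).differentiableAt.differentiableWithinAt)
    (fun s hs => (hderiv s hs).deriv ▸ (h.2.2 s (interior_subset hs)).2.2.2.2)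
    0 self_mem_Ici t ht ht
  rwa [h.1, sub_zero] at hbound

theorem exists_eq_of_le (h : AdmissibleDI umin umax vmin vmax x0 v0 x v u) {t β : ℝ}
    (ht : 0 ≤ t) (hβ₀ : x0 ≤ β) (hβt : β ≤ x t) : ∃ s ∈ Icc 0 t, x s = β :=
  intermediate_value_Icc ht (h.continuousOn.mono Icc_subset_Ici_self) ⟨h.1 ▸ hβ₀, hβt⟩

end AdmissibleDI

theorem exists_crossing_le_of_initialSpeed_le {umin umax vmin vmax α β w w' t : ℝ}
    {x v u : ℝ → ℝ} (hu : (0 : ℝ) ∈ Icc umin umax) (hαβ : α ≤ β)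
    (h : AdmissibleDI umin umax vmin vmax α w x v u) (ht : 0 ≤ t) (hxt : x t = β)
    (hw : w ≤ w') (hw' : w' ≤ vmax) :
    ∃ s ∈ Icc 0 t, ∃ x v u : ℝ → ℝ, AdmissibleDI umin umax vmin vmax α w' x v u ∧ x s = β := by
  have hvmax : vmax ∈ Icc vmin vmax := ⟨h.initialSpeed_mem.1.trans (hw.trans hw'), le_rfl⟩
  have hw'_mem : w' ∈ segment ℝ w vmax := by
    rw [segment_eq_Icc (hw.trans hw')]; exact ⟨hw, hw'⟩
  obtain ⟨a, b, ha, hb, hab, rfl⟩ := hw'_mem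
  have hblend := h.combo (AdmissibleDI.cruise (x0 := α) hu hvmax) ha hb hab
  rw [← add_mul, hab, one_mul] at hblend
  have hcruise_ahead : β ≤ α + vmax * t := by linarith [h.sub_le_mul ht]
  have hahead : β ≤ a * x t + b * (α + vmax * t) := by
    rw [hxt]; nlinarith [mul_nonneg hb (sub_nonneg.2 hcruise_ahead), congrArg (· * β) hab]
  obtain ⟨s, hs, hxs⟩ := hblend.exists_eq_of_le ht hαβ hahead
  exact ⟨s, hs, _, _, _, hblend, hxs⟩

theorem minCrossTime_le_of_initialSpeed_le {umin umax vmin vmax α β w w' : ℝ}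
    (hu : (0 : ℝ) ∈ Icc umin umax) (hαβ : α ≤ β)
    (hne : {t : ℝ | 0 ≤ t ∧ ∃ x v u : ℝ → ℝ,
      AdmissibleDI umin umax vmin vmax α w x v u ∧ x t = β}.Nonempty)
    (hw : w ≤ w') (hw' : w' ≤ vmax) :
    minCrossTime umin umax vmin vmax α β w' ≤ minCrossTime umin umax vmin vmax α β w := by
  refine le_csInf hne ?_
  rintro t ⟨ht, x, v, u, h, hxt⟩
  obtain ⟨s, hs, hreach⟩ := exists_crossing_le_of_initialSpeed_le hu hαβ h ht hxt hw hw'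
  exact le_trans (csInf_le ⟨0, fun _ hr => hr.1⟩ ⟨hs.1, hreach⟩) hs.2

theorem stmt_15_general (umin umax vmin vmax α β v0 : ℝ)
    (humin : umin < 0) (humax : 0 < umax)
    (hαβ : α < β) (hv0 : vmin ≤ v0) (hv0' : v0 ≤ vmax)
    (hne : {t : ℝ | 0 ≤ t ∧ ∃ x v u : ℝ → ℝ,
      AdmissibleDI umin umax vmin vmax α vmin x v u ∧ x t = β}.Nonempty) :
    minCrossTime umin umax vmin vmax α β v0 ≤
      minCrossTime umin umax vmin vmax α β vmin :=
  minCrossTime_le_of_initialSpeed_le ⟨humin.le, humax.le⟩ hαβ.le hne hv0 hv0'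

/-- The minimum crossing time is antitone in the initial speed: the minimum time
from initial speed v_min is at least the minimum time from any initial speed
v₀ ≥ v_min. -/
theorem stmt_15 (umin umax vmin vmax α β v0 : ℝ)
    (humin : umin < 0) (humax : 0 < umax) (hvmin : 0 < vmin) (hv : vmin ≤ vmax)
    (hαβ : α < β) (hv0 : vmin ≤ v0) (hv0' : v0 ≤ vmax)
    (hne : {t : ℝ | 0 ≤ t ∧ ∃ x v u : ℝ → ℝ,
      AdmissibleDI umin umax vmin vmax α vmin x v u ∧ x t = β}.Nonempty)
    (hne' : {t : ℝ | 0 ≤ t ∧ ∃ x v u : ℝ → ℝ,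
      AdmissibleDI umin umax vmin vmax α v0 x v u ∧ x t = β}.Nonempty) :
    minCrossTime umin umax vmin vmax α β v0 ≤
      minCrossTime umin umax vmin vmax α β vmin :=
  stmt_15_general umin umax vmin vmax α β v0 humin humax hαβ hv0 hv0' hne
end

section
/- For first-order dynamics with speed in [v_min, v_max], 0 < v_min ≤ v_max, and consecutive conflict areas (α, β) and (α', β') on a vehicle's path with β ≤ α' < β': if entry times and exit times t, p, t', p' satisfy t ≥ 0, (β−α)/v_max ≤ p − t ≤ (β−α)/v_min, p + (α'−β)/v_max ≤ t' ≤ p + (α'−β)/v_min, and (β'−α')/v_max ≤ p' − t' ≤ (β'−α')/v_min, then there exists a measurable speed signal v : [0,∞) → [v_min, v_max] whose induced trajectory x(s) = α − ∫₀ᵗ v + ∫₀ˢ v passes through α at time t, β at time p, α' at time t', and β' at time p'. -/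
open MeasureTheory intervalIntegral

lemma integ_const_on {v : ℝ → ℝ} {a b c : ℝ} (hab : a ≤ b)
    (h : ∀ s ∈ Set.Ico a b, v s = c) : ∫ s in a..b, v s = (b - a) * c := by
  have : ∫ s in a..b, v s = ∫ s in a..b, c := by
    apply intervalIntegral.integral_congr_ae
    have hnull : {x : ℝ | ¬ (x ∈ Set.uIoc a b → v x = c)} ⊆ {b} := by
      intro x hx
      simp only [Set.mem_setOf_eq, Classical.not_imp] at hx
      obtain ⟨hmem, hne⟩ := hx
      rw [Set.uIoc_of_le hab] at hmem
      rcases eq_or_lt_of_le hmem.2 with h' | h'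
      · simp [h']
      · exact absurd (h x ⟨le_of_lt hmem.1, h'⟩) hne
    exact measure_mono_null hnull (measure_singleton b)
  rw [this, intervalIntegral.integral_const, smul_eq_mul]

lemma bdd_intervalIntegrable {v : ℝ → ℝ} {C a b : ℝ} (hm : Measurable v)
    (hb : ∀ s, |v s| ≤ C) : IntervalIntegrable v volume a b := by
  apply IntervalIntegrable.mono_fun' (g := fun _ => C) intervalIntegrable_const
    hm.aestronglyMeasurable.restrict
  exact Filter.Eventually.of_forall fun x => hb x

/-- Realizability of a feasible lower-bound-MILP schedule by a kinematic trajectory: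
if the crossing times of two consecutive conflict areas satisfy the average-speed
interval constraints, there is a measurable speed signal in [v_min, v_max] whose
trajectory achieves all four crossing times. -/
theorem stmt_19 (vmin vmax α β α' β' t p t' p' : ℝ)
    (h0 : 0 < vmin) (hv : vmin ≤ vmax)
    (hαβ : α < β) (hβα' : β ≤ α') (hα'β' : α' < β')
    (ht : 0 ≤ t)
    (h1 : (β - α) / vmax ≤ p - t) (h2 : p - t ≤ (β - α) / vmin)
    (h3 : p + (α' - β) / vmax ≤ t') (h4 : t' ≤ p + (α' - β) / vmin)
    (h5 : (β' - α') / vmax ≤ p' - t') (h6 : p' - t' ≤ (β' - α') / vmin) :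
    ∃ v : ℝ → ℝ, Measurable v ∧ (∀ s, v s ∈ Set.Icc vmin vmax) ∧
      (α - (∫ s in (0:ℝ)..t, v s) + ∫ s in (0:ℝ)..t, v s = α) ∧
      (α - (∫ s in (0:ℝ)..t, v s) + ∫ s in (0:ℝ)..p, v s = β) ∧
      (α - (∫ s in (0:ℝ)..t, v s) + ∫ s in (0:ℝ)..t', v s = α') ∧
      (α - (∫ s in (0:ℝ)..t, v s) + ∫ s in (0:ℝ)..p', v s = β') := by
  have hvmax : 0 < vmax := lt_of_lt_of_le h0 hv
  have htp : 0 < p - t := lt_of_lt_of_le (div_pos (by linarith) hvmax) h1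
  have ht'p' : 0 < p' - t' := lt_of_lt_of_le (div_pos (by linarith) hvmax) h5
  have hpt' : p ≤ t' :=
    le_trans (by nlinarith [div_nonneg (sub_nonneg.2 hβα') hvmax.le]) h3
  set c1 : ℝ := (β - α) / (p - t) with hc1
  set c3 : ℝ := (β' - α') / (p' - t') with hc3
  set c2 : ℝ := if t' = p then vmin else (α' - β) / (t' - p) with hc2
  have hc1b : c1 ∈ Set.Icc vmin vmax := by
    constructor
    · rw [hc1, le_div_iff₀ htp]
      have := (le_div_iff₀ h0).1 h2
      linarith
    · rw [hc1, div_le_iff₀ htp]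
      have := (div_le_iff₀ hvmax).1 h1
      linarith
  have hc3b : c3 ∈ Set.Icc vmin vmax := by
    constructor
    · rw [hc3, le_div_iff₀ ht'p']
      have := (le_div_iff₀ h0).1 h6
      linarith
    · rw [hc3, div_le_iff₀ ht'p']
      have := (div_le_iff₀ hvmax).1 h5
      linarith
  have hc2b : c2 ∈ Set.Icc vmin vmax := by
    rw [hc2]
    split_ifs with h
    · exact ⟨le_refl _, hv⟩
    · have hlt : 0 < t' - p := lt_of_le_of_ne (by linarith) (fun hh => h (by linarith))
      constructor
      · rw [le_div_iff₀ hlt]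
        have : t' - p ≤ (α' - β) / vmin := by linarith
        have := (le_div_iff₀ h0).1 this
        linarith
      · rw [div_le_iff₀ hlt]
        have : (α' - β) / vmax ≤ t' - p := by linarith
        have := (div_le_iff₀ hvmax).1 this
        linarith
  set v : ℝ → ℝ := fun s =>
    if s < t then vmin else if s < p then c1 else if s < t' then c2
      else if s < p' then c3 else vmin with hvdef
  have hmem : ∀ s, v s ∈ Set.Icc vmin vmax := by
    intro s
    simp only [hvdef]
    split_ifs <;> first | exact ⟨le_refl _, hv⟩ | exact hc1b | exact hc2b | exact hc3b
  have hmeas : Measurable v := by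
    apply Measurable.ite (measurableSet_lt measurable_id measurable_const) measurable_const
    apply Measurable.ite (measurableSet_lt measurable_id measurable_const) measurable_const
    apply Measurable.ite (measurableSet_lt measurable_id measurable_const) measurable_const
    exact Measurable.ite (measurableSet_lt measurable_id measurable_const)
      measurable_const measurable_const
  have hbd : ∀ s, |v s| ≤ vmax := fun s =>
    abs_le.2 ⟨by linarith [(hmem s).1], (hmem s).2⟩
  have hint : ∀ a b : ℝ, IntervalIntegrable v volume a b :=
    fun a b => bdd_intervalIntegrable hmeas hbd
  have I1 : ∫ s in t..p, v s = β - α := by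
    rw [integ_const_on (v := v) (c := c1) (by linarith) (fun s hs => by
      simp only [hvdef, if_neg (not_lt.2 hs.1), if_pos hs.2])]
    rw [hc1]; field_simp
  have I2 : ∫ s in p..t', v s = α' - β := by
    rw [integ_const_on (v := v) (c := c2) hpt' (fun s hs => by
      have h1' : ¬ s < t := not_lt.2 (le_trans (by linarith) hs.1)
      have h2' : ¬ s < p := not_lt.2 hs.1
      simp only [hvdef, if_neg h1', if_neg h2', if_pos hs.2])]
    rw [hc2]
    split_ifs with h
    · have hd : (α' - β) / vmax ≤ 0 := by rw [h] at h3; linarith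
      have hle : α' ≤ β := by
        by_contra hgt
        exact absurd hd (not_le.2 (div_pos (by linarith) hvmax))
      have hba : α' = β := le_antisymm hle hβα'
      rw [h, hba]; ring
    · have hlt : 0 < t' - p := lt_of_le_of_ne (by linarith) (fun hh => h (by linarith))
      field_simp
  have I3 : ∫ s in t'..p', v s = β' - α' := by
    rw [integ_const_on (v := v) (c := c3) (by linarith) (fun s hs => by
      have h1' : ¬ s < t := not_lt.2 (le_trans (by linarith) hs.1)
      have h2' : ¬ s < p := not_lt.2 (le_trans hpt' hs.1)
      have h3' : ¬ s < t' := not_lt.2 hs.1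
      simp only [hvdef, if_neg h1', if_neg h2', if_neg h3', if_pos hs.2])]
    rw [hc3]; field_simp
  refine ⟨v, hmeas, hmem, by ring, ?_, ?_, ?_⟩
  · have := intervalIntegral.integral_add_adjacent_intervals (hint 0 t) (hint t p)
    rw [← this, I1]; ring
  · have e1 := intervalIntegral.integral_add_adjacent_intervals (hint 0 t) (hint t p)
    have e2 := intervalIntegral.integral_add_adjacent_intervals (hint 0 p) (hint p t')
    rw [← e2, ← e1, I1, I2]; ring
  · have e1 := intervalIntegral.integral_add_adjacent_intervals (hint 0 t) (hint t p)
    have e2 := intervalIntegral.integral_add_adjacent_intervals (hint 0 p) (hint p t')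
    have e3 := intervalIntegral.integral_add_adjacent_intervals (hint 0 t') (hint t' p')
    rw [← e3, ← e2, ← e1, I1, I2, I3]; ring
end
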